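/- Every finite graph G satisfies ⌈χ(G)/3⌉ ≤ χ₁(G) ≤ χ(G). -/

import Mathlib

open SimpleGraph

/-- A 1-selection on `G`: each vertex `v` selects (at most) one pair containing `v`;
deleting the selected pairs from the edge set removes at most one edge incident
to each vertex.  (Selecting a non-edge, e.g. the diagonal, deletes nothing at `v`.) -/
def IsOneSelection {V : Type*} (G : SimpleGraph V) (f : V → Sym2 V) : Prop :=
  ∀ v : V, v ∈ f v

/-- The 1-removed graph `G_f`. -/
def oneRemoved {V : Type*} (G : SimpleGraph V) (f : V → Sym2 V) : SimpleGraph V :=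
  G.deleteEdges (Set.range f)

/-- The chromatic number of `G` as a natural number. -/
noncomputable def chromNum {V : Type*} (G : SimpleGraph V) : ℕ :=
  sInf {n : ℕ | G.Colorable n}

/-- The robust chromatic number `χ₁(G)`: the minimum of `χ(G_f)` over all 1-selections. -/
noncomputable def robustChromNum {V : Type*} (G : SimpleGraph V) : ℕ :=
  sInf {m : ℕ | ∃ f : V → Sym2 V, IsOneSelection G f ∧ chromNum (oneRemoved G f) = m}

/-- The robust clique number `ω₁(G)`: the minimum of `ω(G_f)` over all 1-selections. -/
noncomputable def robustCliqueNum {V : Type*} (G : SimpleGraph V) : ℕ :=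
  sInf {m : ℕ | ∃ f : V → Sym2 V, IsOneSelection G f ∧ (oneRemoved G f).cliqueNum = m}

/-- A set of vertices is independent if no two of its elements are adjacent. -/
def IsIndepVxSet {V : Type*} (G : SimpleGraph V) (s : Set V) : Prop :=
  s.Pairwise fun a b => ¬ G.Adj a b

/-- The independence number of `G`. -/
noncomputable def indepNum {V : Type*} (G : SimpleGraph V) : ℕ :=
  sSup {n : ℕ | ∃ s : Finset V, IsIndepVxSet G ↑s ∧ s.card = n}

/-- The robust independence number `α₁(G)`: the maximum of `α(G_f)` over all 1-selections. -/
noncomputable def robustIndepNum {V : Type*} (G : SimpleGraph V) : ℕ :=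
  sSup {m : ℕ | ∃ f : V → Sym2 V, IsOneSelection G f ∧ _root_.indepNum (oneRemoved G f) = m}

/-- `U` is robust independent in `G` if some 1-selection makes it independent. -/
def IsRobustIndep {V : Type*} (G : SimpleGraph V) (U : Set V) : Prop :=
  ∃ f : V → Sym2 V, IsOneSelection G f ∧ IsIndepVxSet (oneRemoved G f) U

/-- Threshold graph. -/
def IsThresholdGraph {V : Type*} (G : SimpleGraph V) : Prop :=
  ∃ (h : ℝ) (g : V → ℝ), ∀ x y : V, x ≠ y → (G.Adj x y ↔ g x + g y > h)

/-- `G` is ω-unique: it has exactly one clique of order `ω(G)`. -/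
def IsOmegaUnique {V : Type*} (G : SimpleGraph V) : Prop :=
  ∃! s : Finset V, G.IsNClique G.cliqueNum s

/-- Split graph: vertex set partitions into a clique and an independent set. -/
def IsSplitGraph {V : Type*} (G : SimpleGraph V) : Prop :=
  ∃ A : Set V, G.IsClique A ∧ IsIndepVxSet G Aᶜ

/-- Chordal graph: no induced cycle of length greater than 3. -/
def IsChordalGraph {V : Type*} (G : SimpleGraph V) : Prop :=
  ∀ n : ℕ, 4 ≤ n → ¬ ∃ φ : Fin n ↪ V,
    ∀ i j : Fin n, G.Adj (φ i) (φ j) ↔ (SimpleGraph.cycleGraph n).Adj i j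

/-- Interval graph: vertices can be assigned nonempty closed real intervals so that
two distinct vertices are adjacent iff their intervals intersect. -/
def IsIntervalGraph {V : Type*} (G : SimpleGraph V) : Prop :=
  ∃ a b : V → ℝ, (∀ v, a v ≤ b v) ∧
    ∀ u v : V, u ≠ v →
      (G.Adj u v ↔ (Set.Icc (a u) (b u) ∩ Set.Icc (a v) (b v)).Nonempty)

/-- Unit interval graph: vertices can be labelled by reals so that two distinct
vertices are adjacent iff their labels are at distance less than 1. -/
def IsUnitIntervalGraph {V : Type*} (G : SimpleGraph V) : Prop :=
  ∃ r : V → ℝ, ∀ u v : V, u ≠ v → (G.Adj u v ↔ |r u - r v| < 1)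

/-- Quasi-unicyclic: every connected component contains at most one cycle,
i.e. any two cycles lying in the same component have the same edge set. -/
def QuasiUnicyclic {V : Type*} [DecidableEq V] (G : SimpleGraph V) : Prop :=
  ∀ (u v : V) (p : G.Walk u u) (q : G.Walk v v),
    p.IsCycle → q.IsCycle → G.Reachable u v →
      p.edges.toFinset = q.edges.toFinset

/-- The Kneser graph `KG(n,k)`. -/
def kneserGraph (n k : ℕ) : SimpleGraph {s : Finset (Fin n) // s.card = k} where
  Adj a b := a ≠ b ∧ Disjoint a.1 b.1
  symm := by
    constructor
    intro a b hab
    exact ⟨hab.1.symm, hab.2.symm⟩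
  loopless := by
    constructor
    intro a ha
    exact ha.1 rfl

/-!
Writing each selected pair as `f v = s(v, g v)`, the removed edges form the graph of the map `g`.
Any `k` vertices span at most `k` such edges, so some vertex has at most two neighbours in it;
removing that vertex and recolouring it last shows that the graph of `g` is `3`-colourable.
Overlaying this colouring with an optimal colouring of `G_f` colours `G` with `3 χ(G_f)` colours.
The upper bound comes from selecting the diagonal pair `s(v, v)` at every vertex, which removes
nothing.
-/

namespace SimpleGraph

variable {V : Type*}

theorem Colorable.sup {G H : SimpleGraph V} {n m : ℕ} (hG : G.Colorable n) (hH : H.Colorable m) :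
    (G ⊔ H).Colorable (n * m) := by
  obtain ⟨C⟩ := hG
  obtain ⟨D⟩ := hH
  have E : (G ⊔ H).Coloring (Fin n × Fin m) :=
    Coloring.mk (fun v => (C v, D v)) fun {_ _} hadj heq =>
      hadj.elim (fun h => C.valid h (congrArg Prod.fst heq))
        (fun h => D.valid h (congrArg Prod.snd heq))
  simpa using E.colorable

theorem exists_fin_three_coloring_of_map (g : V → V) (S : Finset V) :
    ∃ c : V → Fin 3, ∀ v ∈ S, g v ≠ v → c v ≠ c (g v) := by
  classical
  induction S using Finset.strongInduction with
  | H S ih =>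
  rcases S.eq_empty_or_nonempty with rfl | hS
  · exact ⟨0, by simp⟩
  -- pigeonhole: the `#S` arrows out of `S` cannot hit every vertex of `S` twice
  obtain ⟨y, hyS, hfiber⟩ := Finset.exists_card_fiber_lt_of_card_lt_mul (s := S) (t := S)
    (f := g) (n := 2) (by have := hS.card_pos; omega)
  obtain ⟨c, hc⟩ := ih (S.erase y) (Finset.erase_ssubset hyS)
  set nbhd := (insert (g y) {x ∈ S | g x = y}).erase y
  have hcard : (nbhd.image c).card < (Finset.univ : Finset (Fin 3)).card := calc
    (nbhd.image c).card ≤ nbhd.card := Finset.card_image_le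
    _ ≤ (insert (g y) {x ∈ S | g x = y}).card := Finset.card_erase_le
    _ ≤ {x ∈ S | g x = y}.card + 1 := Finset.card_insert_le _ _
    _ < 3 := by omega
  obtain ⟨a, -, ha⟩ := Finset.exists_mem_notMem_of_card_lt_card hcard
  refine ⟨Function.update c y a, fun v hv hgv => ?_⟩
  by_cases hvy : v = y
  · subst hvy
    have hgN : g v ∈ nbhd := Finset.mem_erase.2 ⟨hgv, Finset.mem_insert_self _ _⟩
    rw [Function.update_self, Function.update_of_ne hgv]
    exact fun h => ha (h ▸ Finset.mem_image_of_mem c hgN)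
  rw [Function.update_of_ne hvy]
  by_cases hgvy : g v = y
  · have hvN : v ∈ nbhd :=
      Finset.mem_erase.2 ⟨hvy, Finset.mem_insert_of_mem (by simp [hv, hgvy])⟩
    rw [hgvy, Function.update_self]
    exact fun h => ha (h ▸ Finset.mem_image_of_mem c hvN)
  · rw [Function.update_of_ne hgvy]
    exact hc v (Finset.mem_erase.2 ⟨hvy, hv⟩) hgv

theorem colorable_three_fromEdgeSet_range_mk [Fintype V] (g : V → V) :
    (fromEdgeSet (Set.range fun v => s(v, g v))).Colorable 3 := by
  obtain ⟨c, hc⟩ := exists_fin_three_coloring_of_map g Finset.univ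
  refine ⟨Coloring.mk c fun {u w} hadj heq => ?_⟩
  obtain ⟨⟨v, hv⟩, huw⟩ := (fromEdgeSet_adj _).1 hadj
  rcases Sym2.eq_iff.1 hv with ⟨rfl, rfl⟩ | ⟨rfl, rfl⟩
  · exact hc v (Finset.mem_univ v) huw.symm heq
  · exact hc v (Finset.mem_univ v) huw heq.symm

end SimpleGraph

variable {V : Type*}

theorem chromNum_le {G : SimpleGraph V} {n : ℕ} (h : G.Colorable n) : chromNum G ≤ n :=
  Nat.sInf_le h

theorem colorable_chromNum [Fintype V] (G : SimpleGraph V) : G.Colorable (chromNum G) :=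
  Nat.sInf_mem (s := {n | G.Colorable n}) ⟨_, G.colorable_of_fintype⟩

theorem isOneSelection_diag (G : SimpleGraph V) : IsOneSelection G fun v => s(v, v) :=
  fun v => Sym2.mem_mk_left v v

theorem oneRemoved_diag (G : SimpleGraph V) : oneRemoved G (fun v => s(v, v)) = G :=
  G.deleteEdges_of_subset_diagSet (Set.range_subset_iff.2 fun _ => Sym2.mk_isDiag_iff.2 rfl)

theorem chromNum_le_three_mul_chromNum_oneRemoved [Fintype V] {G : SimpleGraph V}
    {f : V → Sym2 V} (hf : IsOneSelection G f) :
    chromNum G ≤ 3 * chromNum (oneRemoved G f) := by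
  choose g hg using fun v => Sym2.mem_iff_exists.1 (hf v)
  obtain rfl : f = fun v => s(v, g v) := funext hg
  have hle : G ≤ fromEdgeSet (Set.range fun v => s(v, g v)) ⊔ oneRemoved G _ :=
    (G.deleteEdges_le_iff _ _).1 le_rfl
  exact chromNum_le <|
    ((colorable_three_fromEdgeSet_range_mk g).sup (colorable_chromNum _)).mono_left hle

/-- Every finite graph `G` satisfies `⌈χ(G)/3⌉ ≤ χ₁(G) ≤ χ(G)`. -/
theorem robustChromNum_bounds (V : Type) [Fintype V] (G : SimpleGraph V) :
    (chromNum G + 2) / 3 ≤ robustChromNum G ∧ robustChromNum G ≤ chromNum G := by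
  constructor
  · refine le_csInf ⟨_, _, isOneSelection_diag G, rfl⟩ ?_
    rintro _ ⟨f, hf, rfl⟩
    have := chromNum_le_three_mul_chromNum_oneRemoved hf
    omega
  · exact Nat.sInf_le ⟨_, isOneSelection_diag G, by rw [oneRemoved_diag]⟩
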